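/- arXiv:1304.3365 — 2 statements merged into one kernel-verified Lean document; each statement's English description precedes it below -/
import Mathlib

section
/- Let $Y$ be a real symmetric positive semidefinite $n \times n$ matrix and $r$ a positive integer with $r < n$. Then for every real symmetric positive semidefinite $n \times n$ matrix $Z$ whose $(r+1)$-st smallest eigenvalue $\lambda_{r+1}(Z)$ is positive, one has $\sum_{i > r} \sigma_i(Y) \le \frac{\mathrm{tr}(YZ)}{\lambda_{r+1}(Z)}$, where $\sigma_1(Y) \ge \sigma_2(Y) \ge \cdots \ge \sigma_n(Y)$ are the eigenvalues of $Y$ in decreasing order. -/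
open Matrix Finset

/-- Threshold lemma: if `c j ∈ [0,1]` sums to `T.card`, `ν ≤ t` on `T` and `ν ≥ t` off `T`,
then `∑_{j∈T} ν j ≤ ∑ j, ν j * c j`. -/
lemma key_threshold {n : ℕ} (ν c : Fin n → ℝ) (T : Finset (Fin n)) (t : ℝ)
    (hc0 : ∀ j, 0 ≤ c j) (hc1 : ∀ j, c j ≤ 1) (hsum : ∑ j, c j = (T.card : ℝ))
    (hT : ∀ j ∈ T, ν j ≤ t) (hTc : ∀ j ∉ T, t ≤ ν j) :
    ∑ j ∈ T, ν j ≤ ∑ j, ν j * c j := by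
  have h1 : ∑ j ∈ T, (ν j + t * (c j - 1)) ≤ ∑ j ∈ T, ν j * c j := by
    refine Finset.sum_le_sum fun j hj => ?_
    nlinarith [hT j hj, hc1 j]
  have h2 : ∑ j ∈ Tᶜ, t * c j ≤ ∑ j ∈ Tᶜ, ν j * c j := by
    refine Finset.sum_le_sum fun j hj => ?_
    have := hTc j (Finset.mem_compl.mp hj)
    nlinarith [hc0 j]
  have hsplit : ∑ j, ν j * c j = ∑ j ∈ T, ν j * c j + ∑ j ∈ Tᶜ, ν j * c j :=
    (Finset.sum_add_sum_compl T _).symm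
  have hsplit' : ∑ j, c j = ∑ j ∈ T, c j + ∑ j ∈ Tᶜ, c j :=
    (Finset.sum_add_sum_compl T _).symm
  have e1 : ∑ j ∈ T, (ν j + t * (c j - 1)) =
      ∑ j ∈ T, ν j + t * (∑ j ∈ T, c j - T.card) := by
    rw [Finset.sum_add_distrib, ← Finset.mul_sum]
    congr 1
    rw [Finset.sum_sub_distrib]
    simp [mul_sub]
  have e2 : ∑ j ∈ Tᶜ, t * c j = t * ∑ j ∈ Tᶜ, c j := by rw [Finset.mul_sum]
  have : ∑ j ∈ T, ν j + t * (∑ j ∈ T, c j - T.card) + t * ∑ j ∈ Tᶜ, c j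
      ≤ ∑ j, ν j * c j := by
    rw [hsplit, ← e1, ← e2]; exact add_le_add h1 h2
  have hcard : ∑ j ∈ T, c j + ∑ j ∈ Tᶜ, c j = (T.card : ℝ) := by rw [← hsplit']; exact hsum
  have hz : t * (∑ j ∈ T, c j - T.card) + t * ∑ j ∈ Tᶜ, c j = 0 := by
    linear_combination t * hcard
  linarith [this, hz]

/-- von Neumann-type trace bound: for PSD `Y`, `Z` with sorted
eigenvalues `σ` (decreasing, for `Y`) and `lam` (increasing, for `Z`), if
`lam (r+1) > 0` (1-indexed, i.e. index `r` 0-indexed) then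
`∑_{i > r} σ i ≤ tr (Y Z) / lam (r+1)`. -/
theorem stmt2 {n : ℕ} (r : ℕ) (hr : 0 < r) (hrn : r < n)
    (Y Z : Matrix (Fin n) (Fin n) ℝ) (hY : Y.PosSemidef) (hZ : Z.PosSemidef)
    (σ lam : Fin n → ℝ)
    (hσa : Antitone σ) (hσe : ∃ e : Equiv.Perm (Fin n), σ = hY.1.eigenvalues ∘ e)
    (hlm : Monotone lam) (hle : ∃ e : Equiv.Perm (Fin n), lam = hZ.1.eigenvalues ∘ e)
    (hpos : 0 < lam ⟨r, hrn⟩) :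
    ∑ i ∈ Finset.univ.filter (fun i : Fin n => r ≤ (i : ℕ)), σ i
      ≤ Matrix.trace (Y * Z) / lam ⟨r, hrn⟩ := by
  obtain ⟨e, he⟩ := hσe
  obtain ⟨f, hf⟩ := hle
  set ν : Fin n → ℝ := hY.1.eigenvalues with hν
  set μ : Fin n → ℝ := hZ.1.eigenvalues with hμ
  set Um : Matrix (Fin n) (Fin n) ℝ := (hY.1.eigenvectorUnitary : Matrix (Fin n) (Fin n) ℝ) with hUm
  set Vm : Matrix (Fin n) (Fin n) ℝ := (hZ.1.eigenvectorUnitary : Matrix (Fin n) (Fin n) ℝ) with hVm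
  set W : Matrix (Fin n) (Fin n) ℝ := star Um * Vm with hW
  have hUmem : Um ∈ Matrix.unitaryGroup (Fin n) ℝ := (hY.1.eigenvectorUnitary).2
  have hVmem : Vm ∈ Matrix.unitaryGroup (Fin n) ℝ := (hZ.1.eigenvectorUnitary).2
  have hU1 : Um * star Um = 1 := (Matrix.mem_unitaryGroup_iff).mp hUmem
  have hU1' : star Um * Um = 1 := (Matrix.mem_unitaryGroup_iff').mp hUmem
  have hV1 : Vm * star Vm = 1 := (Matrix.mem_unitaryGroup_iff).mp hVmem
  have hV1' : star Vm * Vm = 1 := (Matrix.mem_unitaryGroup_iff').mp hVmem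
  have hWW : star W * W = 1 := by
    rw [hW, Matrix.star_mul, star_star, Matrix.mul_assoc, ← Matrix.mul_assoc Um, hU1, Matrix.one_mul, hV1']
  have hWW' : W * star W = 1 := by
    rw [hW, Matrix.star_mul, star_star, Matrix.mul_assoc, ← Matrix.mul_assoc Vm, hV1, Matrix.one_mul, hU1']
  -- row and column sums of squares
  have colsum : ∀ i, ∑ j, (W j i) ^ 2 = 1 := by
    intro i
    have := congrFun (congrFun hWW i) i
    simp only [Matrix.mul_apply, Matrix.one_apply_eq, Matrix.star_apply, star_trivial] at this
    rw [← this]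
    exact Finset.sum_congr rfl fun j _ => by ring
  have rowsum : ∀ j, ∑ i, (W j i) ^ 2 = 1 := by
    intro j
    have := congrFun (congrFun hWW' j) j
    simp only [Matrix.mul_apply, Matrix.one_apply_eq, Matrix.star_apply, star_trivial] at this
    rw [← this]
    exact Finset.sum_congr rfl fun i _ => by ring
  -- spectral decompositions
  have hYs : Y = Um * Matrix.diagonal ν * star Um := by
    have := hY.1.spectral_theorem
    simpa using this
  have hZs : Z = Vm * Matrix.diagonal μ * star Vm := by
    have := hZ.1.spectral_theorem
    simpa using this
  -- trace formula
  have hmain : Y * Z = Um * (Matrix.diagonal ν * W * Matrix.diagonal μ * star W) * star Um := by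
    rw [hYs, hZs, hW, Matrix.star_mul, star_star]
    simp only [Matrix.mul_assoc]
    rw [hU1]
    simp only [Matrix.mul_one]
  have hK : ∀ j i, (Matrix.diagonal ν * W * Matrix.diagonal μ) j i = ν j * W j i * μ i := by
    intro j i
    rw [Matrix.mul_diagonal, Matrix.diagonal_mul]
  have htr : Matrix.trace (Y * Z)
      = ∑ j, ∑ i, ν j * μ i * (W j i) ^ 2 := by
    rw [hmain, Matrix.trace_mul_cycle, ← Matrix.mul_assoc, hU1', Matrix.one_mul]
    rw [Matrix.trace]
    refine Finset.sum_congr rfl fun j _ => ?_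
    rw [Matrix.diag_apply, Matrix.mul_apply]
    refine Finset.sum_congr rfl fun i _ => ?_
    rw [hK, Matrix.star_apply, star_trivial]
    ring
  have hν0 : ∀ j, 0 ≤ ν j := hY.eigenvalues_nonneg
  have hμ0 : ∀ i, 0 ≤ μ i := hZ.eigenvalues_nonneg
  set t : ℝ := σ ⟨r, hrn⟩ with ht
  set S0 : Finset (Fin n) := Finset.univ.filter (fun k : Fin n => r ≤ (k : ℕ)) with hS0
  set a : Fin n → ℝ := fun i => ∑ j, ν j * (W j i) ^ 2 with ha
  have ha0 : ∀ i, 0 ≤ a i := fun i =>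
    Finset.sum_nonneg fun j _ => mul_nonneg (hν0 j) (sq_nonneg _)
  have htr' : Matrix.trace (Y * Z) = ∑ i, μ i * a i := by
    rw [htr, Finset.sum_comm]
    refine Finset.sum_congr rfl fun i _ => ?_
    rw [ha, Finset.mul_sum]
    exact Finset.sum_congr rfl fun j _ => by ring
  have hlam0 : ∀ k, 0 ≤ lam k := fun k => by rw [hf]; exact hμ0 (f k)
  have hre : Matrix.trace (Y * Z) = ∑ k, lam k * a (f k) := by
    rw [htr', ← Equiv.sum_comp f (fun i => μ i * a i)]
    exact Finset.sum_congr rfl fun k _ => by rw [hf]; rfl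
  set c : Fin n → ℝ := fun j => ∑ k ∈ S0, (W j (f k)) ^ 2 with hc
  have hc0 : ∀ j, 0 ≤ c j := fun j => Finset.sum_nonneg fun k _ => sq_nonneg _
  have hc1 : ∀ j, c j ≤ 1 := by
    intro j
    calc c j ≤ ∑ k, (W j (f k)) ^ 2 :=
          Finset.sum_le_sum_of_subset_of_nonneg (Finset.subset_univ _)
            (fun k _ _ => sq_nonneg _)
      _ = ∑ i, (W j i) ^ 2 := Equiv.sum_comp f (fun i => (W j i) ^ 2)
      _ = 1 := rowsum j
  have hcsum : ∑ j, c j = (S0.card : ℝ) := by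
    rw [Finset.sum_comm]
    rw [Finset.sum_congr rfl fun k _ => colsum (f k)]
    simp
  set T : Finset (Fin n) := S0.image e with hTdef
  have hcardT : T.card = S0.card := Finset.card_image_of_injective _ e.injective
  have hσν : ∀ k, σ k = ν (e k) := fun k => by rw [he]; rfl
  have hT : ∀ j ∈ T, ν j ≤ t := by
    intro j hj
    obtain ⟨k, hk, rfl⟩ := Finset.mem_image.mp hj
    rw [← hσν]
    exact hσa (by simpa [Fin.le_def, hS0] using (Finset.mem_filter.mp hk).2)
  have hTc : ∀ j ∉ T, t ≤ ν j := by
    intro j hj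
    have hkv : ((e.symm j : Fin n) : ℕ) < r := by
      by_contra h
      exact hj (Finset.mem_image.mpr ⟨e.symm j,
        Finset.mem_filter.mpr ⟨Finset.mem_univ _, le_of_not_gt h⟩, e.apply_symm_apply j⟩)
    have h1 : σ ⟨r, hrn⟩ ≤ σ (e.symm j) := hσa (by simp [Fin.le_def]; omega)
    have h2 := hσν (e.symm j)
    rw [e.apply_symm_apply] at h2
    rw [ht, ← h2]
    exact h1
  have hkey : ∑ j ∈ T, ν j ≤ ∑ j, ν j * c j :=
    key_threshold ν c T t hc0 hc1 (by rw [hcardT]; exact hcsum) hT hTc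
  have hTsum : ∑ j ∈ T, ν j = ∑ k ∈ S0, σ k := by
    rw [hTdef, Finset.sum_image (fun x _ y _ h => e.injective h)]
    exact Finset.sum_congr rfl fun k _ => (hσν k).symm
  have hswap : ∑ j, ν j * c j = ∑ k ∈ S0, a (f k) := by
    calc ∑ j, ν j * c j = ∑ j, ∑ k ∈ S0, ν j * (W j (f k)) ^ 2 := by
          refine Finset.sum_congr rfl fun j _ => ?_
          rw [hc, Finset.mul_sum]
      _ = ∑ k ∈ S0, ∑ j, ν j * (W j (f k)) ^ 2 := Finset.sum_comm
      _ = ∑ k ∈ S0, a (f k) := rfl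
  have hstep2 : lam ⟨r, hrn⟩ * ∑ k ∈ S0, a (f k) ≤ ∑ k ∈ S0, lam k * a (f k) := by
    rw [Finset.mul_sum]
    refine Finset.sum_le_sum fun k hk => ?_
    refine mul_le_mul_of_nonneg_right ?_ (ha0 _)
    exact hlm (by simpa [Fin.le_def, hS0] using (Finset.mem_filter.mp hk).2)
  have hstep1 : ∑ k ∈ S0, lam k * a (f k) ≤ ∑ k, lam k * a (f k) :=
    Finset.sum_le_sum_of_subset_of_nonneg (Finset.subset_univ _)
      (fun k _ _ => mul_nonneg (hlam0 k) (ha0 _))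
  rw [le_div_iff₀ hpos]
  calc (∑ i ∈ S0, σ i) * lam ⟨r, hrn⟩ = lam ⟨r, hrn⟩ * ∑ j ∈ T, ν j := by
        rw [hTsum]; ring
    _ ≤ lam ⟨r, hrn⟩ * ∑ j, ν j * c j :=
        mul_le_mul_of_nonneg_left hkey (le_of_lt hpos)
    _ = lam ⟨r, hrn⟩ * ∑ k ∈ S0, a (f k) := by rw [hswap]
    _ ≤ ∑ k ∈ S0, lam k * a (f k) := hstep2
    _ ≤ ∑ k, lam k * a (f k) := hstep1
    _ = Matrix.trace (Y * Z) := hre.symm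
end

section
/- Let $L$ be the Laplacian of a weighted graph on vertex set $V$ (a real symmetric PSD matrix with $x^T L x = \sum_{u<v} C_{uv}(x_u - x_v)^2$ for nonnegative weights $C_{uv}$). Let $S_1, \ldots, S_r$ be $r$ pairwise disjoint nonempty subsets of $V$. Then $\max_{i \in [r]} \frac{\mathbf{1}_{S_i}^T L \mathbf{1}_{S_i}}{|S_i|} \ge \frac{\lambda_r(L)}{2}$, where $\lambda_r(L)$ is the $r$-th smallest eigenvalue of $L$ and $\mathbf{1}_{S_i}$ is the 0/1 indicator vector of $S_i$. -/
/-!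
Take `h = ∑ᵢ cᵢ 𝟙_{Sᵢ}` with `c ≠ 0` chosen orthogonal to the eigenvectors of the `r - 1`
smallest eigenvalues; this is possible because there are `r` free coefficients. Then
`λ_r ‖h‖² ≤ hᵀ L h`. Since the `Sᵢ` are disjoint, `‖h‖² = ∑ cᵢ² |Sᵢ|`, and at most two of the
terms `cᵢ (𝟙_{Sᵢ}(u) - 𝟙_{Sᵢ}(v))` are nonzero, so Cauchy–Schwarz on each edge gives
`hᵀ L h ≤ 2 ∑ cᵢ² 𝟙_{Sᵢ}ᵀ L 𝟙_{Sᵢ}`. Comparing the two weighted sums, some `i` has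
`λ_r |Sᵢ| / 2 ≤ 𝟙_{Sᵢ}ᵀ L 𝟙_{Sᵢ}`.
-/

open Matrix Finset Function

namespace Matrix.IsHermitian

variable {V : Type*} [Fintype V] [DecidableEq V] {A : Matrix V V ℝ} (hA : A.IsHermitian)

theorem sum_dotProduct_smul_eigenvectorBasis (x : V → ℝ) :
    ∑ i, (⇑(hA.eigenvectorBasis i) ⬝ᵥ x) • ⇑(hA.eigenvectorBasis i) = x := by
  have := congrArg WithLp.ofLp (hA.eigenvectorBasis.sum_repr' (WithLp.toLp 2 x))
  simpa [EuclideanSpace.inner_eq_star_dotProduct, dotProduct_comm] using this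

theorem dotProduct_self_eq_sum_sq (x : V → ℝ) :
    x ⬝ᵥ x = ∑ i, (⇑(hA.eigenvectorBasis i) ⬝ᵥ x) ^ 2 := by
  nth_rw 1 [← hA.sum_dotProduct_smul_eigenvectorBasis x]
  simp only [sum_dotProduct, smul_dotProduct, smul_eq_mul, sq]

theorem dotProduct_mulVec_eq_sum_eigenvalues_mul_sq (x : V → ℝ) :
    x ⬝ᵥ A *ᵥ x = ∑ i, hA.eigenvalues i * (⇑(hA.eigenvectorBasis i) ⬝ᵥ x) ^ 2 := by
  nth_rw 2 [← hA.sum_dotProduct_smul_eigenvectorBasis x]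
  simp only [mulVec_sum, mulVec_smul, mulVec_eigenvectorBasis, dotProduct_sum, dotProduct_smul,
    smul_eq_mul]
  exact sum_congr rfl fun i _ => by rw [dotProduct_comm x]; ring

theorem mul_dotProduct_self_le_dotProduct_mulVec {μ : ℝ} {x : V → ℝ}
    (hx : ∀ i, hA.eigenvalues i < μ → ⇑(hA.eigenvectorBasis i) ⬝ᵥ x = 0) :
    μ * (x ⬝ᵥ x) ≤ x ⬝ᵥ A *ᵥ x := by
  rw [hA.dotProduct_self_eq_sum_sq, hA.dotProduct_mulVec_eq_sum_eigenvalues_mul_sq, mul_sum]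
  refine sum_le_sum fun i _ => ?_
  rcases lt_or_ge (hA.eigenvalues i) μ with hi | hi
  · simp [hx i hi]
  · exact mul_le_mul_of_nonneg_right hi (sq_nonneg _)

end Matrix.IsHermitian

theorem exists_ne_zero_forall_dotProduct_sum_smul_eq_zero {K V ι κ : Type*} [Field K]
    [Fintype V] [Fintype ι] [Fintype κ] (hcard : Fintype.card κ < Fintype.card ι)
    (g : κ → V → K) (f : ι → V → K) : ∃ c : ι → K, c ≠ 0 ∧ ∀ k, g k ⬝ᵥ ∑ i, c i • f i = 0 := by
  let M : Matrix κ ι K := of fun k i => g k ⬝ᵥ f i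
  have hker : LinearMap.ker M.mulVecLin ≠ ⊥ :=
    M.mulVecLin.ker_ne_bot_of_finrank_lt (by simpa using hcard)
  obtain ⟨c, hc, hc0⟩ := (Submodule.ne_bot_iff _).mp hker
  refine ⟨c, hc0, fun k => ?_⟩
  have : ∑ i, (g k ⬝ᵥ f i) * c i = 0 := congrFun (LinearMap.mem_ker.mp hc) k
  simpa only [dotProduct_sum, dotProduct_smul, smul_eq_mul, mul_comm] using this

theorem sq_sum_le_two_mul_sum_sq {ι : Type*} (s : Finset ι) (a : ι → ℝ)
    (ha : #{i ∈ s | a i ≠ 0} ≤ 2) : (∑ i ∈ s, a i) ^ 2 ≤ 2 * ∑ i ∈ s, a i ^ 2 := by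
  rw [← sum_filter_ne_zero, ← sum_filter_of_ne fun i _ (h : a i ^ 2 ≠ 0) => by simpa using h]
  calc (∑ i ∈ s with a i ≠ 0, a i) ^ 2
      ≤ (#{i ∈ s | a i ≠ 0} : ℝ) * ∑ i ∈ s with a i ≠ 0, a i ^ 2 := sq_sum_le_card_mul_sum_sq
    _ ≤ 2 * ∑ i ∈ s with a i ≠ 0, a i ^ 2 := by gcongr; exact_mod_cast ha

theorem Finset.card_filter_mem_le_one {ι α : Type*} [Fintype ι] [DecidableEq α]
    {S : ι → Finset α} (hS : Pairwise (Disjoint on S)) (a : α) : #{i | a ∈ S i} ≤ 1 :=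
  card_le_one.mpr fun i hi j hj => by
    by_contra hij
    exact disjoint_left.mp (hS hij) (mem_filter.mp hi).2 (mem_filter.mp hj).2

theorem exists_mul_le_of_mul_sum_sq_mul_le {ι : Type*} [Fintype ι] {c : ι → ℝ} (hc : c ≠ 0)
    {μ : ℝ} {n q : ι → ℝ} (h : μ * ∑ i, c i ^ 2 * n i ≤ ∑ i, c i ^ 2 * q i) :
    ∃ i, μ * n i ≤ q i := by
  by_contra! hlt
  obtain ⟨j, hj⟩ := Function.ne_iff.mp hc
  have : ∑ i, c i ^ 2 * q i < ∑ i, c i ^ 2 * (μ * n i) :=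
    sum_lt_sum (fun i _ => mul_le_mul_of_nonneg_left (hlt i).le (sq_nonneg _))
      ⟨j, mem_univ j, mul_lt_mul_of_pos_left (hlt j) (sq_pos_of_ne_zero hj)⟩
  rw [mul_sum] at h
  exact (h.trans_lt this).ne (sum_congr rfl fun i _ => by ring)

section IndicatorVec

variable {V ι : Type*} [DecidableEq V]

def indicatorVec (s : Finset V) : V → ℝ := fun v => if v ∈ s then 1 else 0

theorem indicatorVec_dotProduct_indicatorVec [Fintype V] (s t : Finset V) :
    indicatorVec s ⬝ᵥ indicatorVec t = #(s ∩ t) := by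
  simp [indicatorVec, dotProduct, inter_comm]

variable [Fintype ι] {S : ι → Finset V}

theorem sum_smul_indicatorVec_dotProduct_self [Fintype V] (hS : Pairwise (Disjoint on S))
    (c : ι → ℝ) :
    (∑ i, c i • indicatorVec (S i)) ⬝ᵥ ∑ i, c i • indicatorVec (S i) = ∑ i, c i ^ 2 * #(S i) := by
  simp only [sum_dotProduct, dotProduct_sum, smul_dotProduct, dotProduct_smul, smul_eq_mul,
    indicatorVec_dotProduct_indicatorVec]
  refine sum_congr rfl fun i _ => ?_
  rw [Fintype.sum_eq_single i fun j hji => by simp [disjoint_iff_inter_eq_empty.mp (hS hji)],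
    inter_self]
  ring

theorem sq_sub_sum_smul_indicatorVec_le (hS : Pairwise (Disjoint on S)) (c : ι → ℝ) (u v : V) :
    ((∑ i, c i • indicatorVec (S i)) u - (∑ i, c i • indicatorVec (S i)) v) ^ 2 ≤
      2 * ∑ i, c i ^ 2 * (indicatorVec (S i) u - indicatorVec (S i) v) ^ 2 := by
  classical
  have hsupp : #{i | c i * (indicatorVec (S i) u - indicatorVec (S i) v) ≠ 0} ≤ 2 := by
    calc _ ≤ #(({i | u ∈ S i} : Finset ι) ∪ ({i | v ∈ S i} : Finset ι)) :=
          card_le_card fun i hi => by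
            simp only [mem_filter, mem_univ, true_and, mem_union] at hi ⊢
            by_contra!
            simp [indicatorVec, this] at hi
      _ ≤ #{i | u ∈ S i} + #{i | v ∈ S i} := card_union_le _ _
      _ ≤ 2 := by linarith [card_filter_mem_le_one hS u, card_filter_mem_le_one hS v]
  convert sq_sum_le_two_mul_sum_sq _ _ hsupp using 2
  · simp [Finset.sum_apply, ← sum_sub_distrib, mul_sub]
  · exact sum_congr rfl fun i _ => by ring

theorem dotProduct_mulVec_sum_smul_indicatorVec_le [Fintype V] {L : Matrix V V ℝ}
    {C : V → V → ℝ} (hC : ∀ u v, 0 ≤ C u v)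
    (hform : ∀ x : V → ℝ, x ⬝ᵥ L *ᵥ x = 1 / 2 * ∑ u, ∑ v, C u v * (x u - x v) ^ 2)
    (hS : Pairwise (Disjoint on S)) (c : ι → ℝ) :
    (∑ i, c i • indicatorVec (S i)) ⬝ᵥ L *ᵥ ∑ i, c i • indicatorVec (S i) ≤
      2 * ∑ i, c i ^ 2 * (indicatorVec (S i) ⬝ᵥ L *ᵥ indicatorVec (S i)) := by
  simp only [hform]
  calc _ ≤ 1 / 2 * ∑ u, ∑ v, C u v *
          (2 * ∑ i, c i ^ 2 * (indicatorVec (S i) u - indicatorVec (S i) v) ^ 2) := by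
        gcongr with u _ v _
        exacts [hC u v, sq_sub_sum_smul_indicatorVec_le hS c u v]
    _ = _ := by
      simp only [mul_sum]
      conv_rhs => rw [sum_comm]; enter [2, u]; rw [sum_comm]
      exact sum_congr rfl fun u _ => sum_congr rfl fun v _ => sum_congr rfl fun i _ => by ring

end IndicatorVec

/-- For a graph Laplacian `L` (symmetric, quadratic form
`xᵀLx = (1/2)∑∑ C u v (x u - x v)²` with `C` nonnegative symmetric) and
`r` pairwise disjoint nonempty subsets `S i`, some `S i` satisfies
`1_{S i}ᵀ L 1_{S i} / |S i| ≥ λ_r(L) / 2`, where `λ_r` is the `r`-th smallest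
eigenvalue (given by a monotone enumeration `lam` of the eigenvalues). -/
theorem stmt4 {V : Type*} [Fintype V] [DecidableEq V]
    (L : Matrix V V ℝ) (hL : L.IsHermitian)
    (C : V → V → ℝ) (hC : ∀ u v, 0 ≤ C u v)
    (hform : ∀ x : V → ℝ,
      x ⬝ᵥ L.mulVec x = (1 / 2) * ∑ u : V, ∑ v : V, C u v * (x u - x v) ^ 2)
    (lam : Fin (Fintype.card V) → ℝ) (hlm : Monotone lam)
    (hle : ∃ e : Fin (Fintype.card V) ≃ V, lam = hL.eigenvalues ∘ e)
    (r : ℕ) (hr : 0 < r) (hrn : r ≤ Fintype.card V)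
    (S : Fin r → Finset V) (hne : ∀ i, (S i).Nonempty)
    (hdisj : ∀ i j, i ≠ j → Disjoint (S i) (S j)) :
    ∃ i : Fin r,
      lam ⟨r - 1, by omega⟩ / 2
        ≤ ((fun v => if v ∈ S i then (1 : ℝ) else 0) ⬝ᵥ
            L.mulVec (fun v => if v ∈ S i then (1 : ℝ) else 0)) / (S i).card := by
  obtain ⟨e, rfl⟩ := hle
  have hS : Pairwise (Disjoint on S) := fun i j => hdisj i j
  obtain ⟨c, hc, horth⟩ := exists_ne_zero_forall_dotProduct_sum_smul_eq_zero
    (by simp only [Fintype.card_fin]; omega : Fintype.card (Fin (r - 1)) < Fintype.card (Fin r))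
    (fun k => ⇑(hL.eigenvectorBasis (e ⟨k, by omega⟩))) (fun i => indicatorVec (S i))
  have hlow := hL.mul_dotProduct_self_le_dotProduct_mulVec
    (μ := hL.eigenvalues (e ⟨r - 1, by omega⟩)) fun v hv => by
      have : e.symm v < ⟨r - 1, by omega⟩ := hlm.reflect_lt (by simpa using hv)
      simpa using horth ⟨e.symm v, this⟩
  rw [sum_smul_indicatorVec_dotProduct_self hS] at hlow
  have hup := dotProduct_mulVec_sum_smul_indicatorVec_le hC hform hS c
  obtain ⟨i, hi⟩ := exists_mul_le_of_mul_sum_sq_mul_le hc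
    (μ := hL.eigenvalues (e ⟨r - 1, by omega⟩) / 2) (n := fun i => #(S i))
    (q := fun i => indicatorVec (S i) ⬝ᵥ L *ᵥ indicatorVec (S i)) (by linarith)
  exact ⟨i, (le_div_iff₀ (by exact_mod_cast (hne i).card_pos)).mpr hi⟩
end
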